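/- Let w ∈ S_n, let J = {2, ..., n−1}, and suppose u ≤ w in Bruhat order with u(1) = w(1). Then u_J ≤ w_J in Bruhat order, where u_J and w_J denote the parabolic components in W_J of the decompositions u = u^J u_J and w = w^J w_J. -/

import Mathlib

open Equiv

/-- The Coxeter length of a permutation: its number of inversions. -/
def permLen {n : ℕ} (w : Perm (Fin n)) : ℕ :=
  (Finset.univ.filter fun p : Fin n × Fin n => p.1 < p.2 ∧ w p.2 < w p.1).card

/-- Bruhat order on `S_n`. -/
def BruhatLE {n : ℕ} (u v : Perm (Fin n)) : Prop :=
  Relation.ReflTransGen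
    (fun x y => permLen x < permLen y ∧ ∃ i j : Fin n, y = x * Equiv.swap i j) u v

/-- The simple transposition `s_{i+1}` (1-indexed), for `i : Fin (n-1)`. -/
def simpleT {n : ℕ} (i : Fin (n - 1)) : Perm (Fin n) :=
  Equiv.swap ⟨i.val, by have := i.isLt; omega⟩ ⟨i.val + 1, by have := i.isLt; omega⟩

/-- The standard parabolic subgroup `W_J` generated by the simple reflections in `J`. -/
def parabolic {n : ℕ} (J : Set (Fin (n - 1))) : Subgroup (Perm (Fin n)) :=
  Subgroup.closure (simpleT '' J)

/-- `W^J`: minimal length representatives of the left cosets `W/W_J`. -/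
def minReps {n : ℕ} (J : Set (Fin (n - 1))) : Set (Perm (Fin n)) :=
  {u | ∀ i ∈ J, permLen u < permLen (u * simpleT i)}

open Finset

variable {n : ℕ}

lemma flip_cases {i j p q : Fin n} (hij : i < j) (hpq : p < q)
    (hf : Equiv.swap i j q < Equiv.swap i j p) : p = i ∨ q = j := by
  by_cases hpi : p = i
  · exact Or.inl hpi
  by_cases hqj : q = j
  · exact Or.inr hqj
  exfalso
  by_cases hqi : q = i
  · have hpj : p ≠ j := ne_of_lt ((hpq.trans_eq hqi).trans hij)
    rw [hqi, Equiv.swap_apply_left, Equiv.swap_apply_of_ne_of_ne hpi hpj] at hf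
    exact absurd (((hf.trans hpq).trans_eq hqi).trans hij) (lt_irrefl _)
  · have hqq : Equiv.swap i j q = q := Equiv.swap_apply_of_ne_of_ne hqi hqj
    by_cases hpj : p = j
    · rw [hqq, hpj, Equiv.swap_apply_right] at hf
      exact absurd ((hij.trans (hpj ▸ hpq)).trans hf) (lt_irrefl _)
    · rw [hqq, Equiv.swap_apply_of_ne_of_ne hpi hpj] at hf
      exact absurd (hpq.trans hf) (lt_irrefl _)

lemma permLen_lt_mul_swap {x : Perm (Fin n)} {i j : Fin n} (hij : i < j) (hx : x i < x j) :
    permLen x < permLen (x * Equiv.swap i j) := by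
  set t := Equiv.swap i j with ht
  have htt : ∀ p : Fin n, t (t p) = p := fun p => Equiv.swap_apply_self i j p
  have hti : t i = j := Equiv.swap_apply_left i j
  have htj : t j = i := Equiv.swap_apply_right i j
  have htinj : ∀ {p q : Fin n}, t p = t q → p = q := fun h => t.injective h
  set B1 := univ.filter (fun p : Fin n × Fin n => p.1 < p.2 ∧ t p.1 < t p.2 ∧ x p.2 < x p.1) with hB1
  set Qneg := univ.filter (fun p : Fin n × Fin n => p.1 < p.2 ∧ t p.2 < t p.1 ∧ x p.2 < x p.1) with hQneg
  set Qpos := univ.filter (fun p : Fin n × Fin n => p.1 < p.2 ∧ t p.2 < t p.1 ∧ x p.1 < x p.2) with hQpos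
  have h1 : permLen (x * t) =
      (univ.filter fun p : Fin n × Fin n => t p.1 < t p.2 ∧ x p.2 < x p.1).card := by
    apply Finset.card_nbij' (fun p => (t p.1, t p.2)) (fun p => (t p.1, t p.2))
    · intro p hp
      simp only [Finset.mem_coe, mem_filter] at hp ⊢
      simp only [Finset.mem_coe, mem_filter, mem_univ, true_and, Equiv.Perm.mul_apply] at hp ⊢
      exact ⟨by rw [htt, htt]; exact hp.1, hp.2⟩
    · intro p hp
      simp only [Finset.mem_coe, mem_filter] at hp ⊢
      simp only [Finset.mem_coe, mem_filter, mem_univ, true_and, Equiv.Perm.mul_apply] at hp ⊢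
      exact ⟨hp.1, by rw [htt, htt]; exact hp.2⟩
    · intro p _; simp [htt]
    · intro p _; simp [htt]
  have hsplitx : permLen x = B1.card + Qneg.card := by
    rw [permLen, ← Finset.card_filter_add_card_filter_not
      (fun p : Fin n × Fin n => t p.1 < t p.2)]
    congr 1
    · rw [filter_filter, hB1]
      refine congrArg Finset.card (filter_congr ?_); intro p _
      tauto
    · rw [filter_filter, hQneg]
      refine congrArg Finset.card (filter_congr ?_); intro p _
      constructor
      · rintro ⟨⟨h1', h2'⟩, h3'⟩
        refine ⟨h1', ?_, h2'⟩
        rcases lt_trichotomy (t p.2) (t p.1) with h | h | h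
        · exact h
        · exact absurd (htinj h) (ne_of_gt h1')
        · exact absurd h h3'
      · rintro ⟨h1', h2', h3'⟩
        exact ⟨⟨h1', h3'⟩, fun hh => absurd (h2'.trans hh) (lt_irrefl _)⟩
  have hsplity : permLen (x * t) = B1.card + Qpos.card := by
    rw [h1, ← Finset.card_filter_add_card_filter_not
      (fun p : Fin n × Fin n => p.1 < p.2)]
    congr 1
    · rw [filter_filter, hB1]
      refine congrArg Finset.card (filter_congr ?_); intro p _
      tauto
    · rw [filter_filter, hQpos]
      apply Finset.card_nbij' (fun p => (p.2, p.1)) (fun p => (p.2, p.1))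
      · intro p hp
        simp only [Finset.mem_coe, mem_filter] at hp ⊢
        simp only [Finset.mem_coe, mem_filter, mem_univ, true_and] at hp ⊢
        obtain ⟨⟨h1', h2'⟩, h3'⟩ := hp
        refine ⟨?_, h1', h2'⟩
        rcases lt_trichotomy p.2 p.1 with h | h | h
        · exact h
        · exact absurd (congrArg t h) (ne_of_gt h1')
        · exact absurd h h3'
      · intro p hp
        simp only [Finset.mem_coe, mem_filter] at hp ⊢
        simp only [Finset.mem_coe, mem_filter, mem_univ, true_and] at hp ⊢
        obtain ⟨h1', h2', h3'⟩ := hp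
        exact ⟨⟨h2', h3'⟩, fun hh => absurd (h1'.trans hh) (lt_irrefl _)⟩
      · intro p _; simp
      · intro p _; simp
  have hmemQpos : (i, j) ∈ Qpos := by
    simp only [hQpos, mem_filter, mem_univ, true_and]
    exact ⟨hij, by rw [hti, htj]; exact hij, hx⟩
  have hinj : Qneg.card ≤ (Qpos.erase (i, j)).card := by
    apply Finset.card_le_card_of_injOn (fun p => if p.1 = i then (p.2, j) else (i, p.1))
    · intro p hp
      simp only [Finset.mem_coe, hQneg, mem_filter] at hp
      simp only [Finset.mem_coe, hQneg, mem_filter, mem_univ, true_and] at hp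
      obtain ⟨hp1, hp2, hp3⟩ := hp
      by_cases hi1 : p.1 = i
      · simp only [if_pos hi1]
        have hp2j : p.2 ≠ j := by
          intro hh; rw [hh, hi1] at hp3; exact absurd hp3 (not_lt.mpr hx.le)
        have hp2i : p.2 ≠ i := ne_of_gt (hi1 ▸ hp1)
        have ht2 : t p.2 = p.2 := Equiv.swap_apply_of_ne_of_ne hp2i hp2j
        rw [ht2, hi1, hti] at hp2
        refine mem_erase.mpr ⟨?_, ?_⟩
        · intro hh
          exact hp2i (congrArg Prod.fst hh)
        · simp only [hQpos, mem_filter, mem_univ, true_and]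
          refine ⟨hp2, ?_, ?_⟩
          · rw [htj, ht2]; exact hi1 ▸ hp1
          · exact hp3.trans (hi1 ▸ hx)
      · have h2 : p.2 = j := (flip_cases hij hp1 hp2).resolve_left hi1
        simp only [if_neg hi1]
        have hp1j : p.1 ≠ j := ne_of_lt (h2 ▸ hp1)
        have ht1 : t p.1 = p.1 := Equiv.swap_apply_of_ne_of_ne hi1 hp1j
        rw [h2, htj, ht1] at hp2
        refine mem_erase.mpr ⟨?_, ?_⟩
        · intro hh
          exact hp1j (congrArg Prod.snd hh)
        · simp only [hQpos, mem_filter, mem_univ, true_and]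
          refine ⟨hp2, ?_, ?_⟩
          · rw [hti, ht1]; exact h2 ▸ hp1
          · exact hx.trans (h2 ▸ hp3)
    · intro p hp q hq heq
      simp only [Finset.mem_coe, hQneg, mem_filter, mem_univ, true_and] at hp hq
      obtain ⟨hp1, hp2, hp3⟩ := hp
      obtain ⟨hq1, hq2, hq3⟩ := hq
      by_cases hpi : p.1 = i <;> by_cases hqi : q.1 = i <;>
        simp only [if_pos, if_neg, hpi, hqi, if_true, if_false] at heq
      · have := congrArg Prod.fst heq
        simp only at this
        exact Prod.ext (hpi.trans hqi.symm) this
      · exfalso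
        have := congrArg Prod.fst heq
        simp only at this
        exact ne_of_gt (hpi ▸ hp1) this
      · exfalso
        have := congrArg Prod.fst heq
        simp only at this
        exact ne_of_gt (hqi ▸ hq1) this.symm
      · have h2p : p.2 = j := (flip_cases hij hp1 hp2).resolve_left hpi
        have h2q : q.2 = j := (flip_cases hij hq1 hq2).resolve_left hqi
        have := congrArg Prod.snd heq
        simp only at this
        exact Prod.ext this (h2p.trans h2q.symm)
  have hcard : (Qpos.erase (i, j)).card = Qpos.card - 1 := Finset.card_erase_of_mem hmemQpos
  have hpos : 0 < Qpos.card := Finset.card_pos.mpr ⟨_, hmemQpos⟩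
  omega

def cnt {n : ℕ} (x : Perm (Fin n)) (k v : ℕ) : ℕ :=
  (univ.filter fun i : Fin n => i.val < k ∧ v ≤ (x i).val).card

def Dom {n : ℕ} (x y : Perm (Fin n)) : Prop := ∀ k v : ℕ, cnt x k v ≤ cnt y k v

lemma cnt_congr {x y : Perm (Fin n)} {k : ℕ} (h : ∀ i : Fin n, i.val < k → x i = y i) (v : ℕ) :
    cnt x k v = cnt y k v := by
  unfold cnt
  refine congrArg Finset.card (filter_congr ?_)
  intro i _
  by_cases hi : i.val < k
  · rw [h i hi]
  · simp [hi]

lemma cnt_mul_swap_high {x : Perm (Fin n)} {i j : Fin n} {k : ℕ}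
    (hik : i.val < k) (hjk : j.val < k) (v : ℕ) :
    cnt (x * Equiv.swap i j) k v = cnt x k v := by
  have hmem : ∀ p : Fin n, p.val < k → (Equiv.swap i j p).val < k := by
    intro p hp
    by_cases hpi : p = i
    · rw [hpi, Equiv.swap_apply_left]; exact hjk
    by_cases hpj : p = j
    · rw [hpj, Equiv.swap_apply_right]; exact hik
    · rw [Equiv.swap_apply_of_ne_of_ne hpi hpj]; exact hp
  apply Finset.card_nbij' (fun p => Equiv.swap i j p) (fun p => Equiv.swap i j p)
  · intro p hp
    simp only [Finset.mem_coe, mem_filter] at hp ⊢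
    simp only [Finset.mem_coe, mem_filter, mem_univ, true_and, Equiv.Perm.mul_apply] at hp ⊢
    exact ⟨hmem p hp.1, hp.2⟩
  · intro p hp
    simp only [Finset.mem_coe, mem_filter] at hp ⊢
    simp only [Finset.mem_coe, mem_filter, mem_univ, true_and, Equiv.Perm.mul_apply] at hp ⊢
    exact ⟨hmem p hp.1, by rw [Equiv.swap_apply_self]; exact hp.2⟩
  · intro p _; simp
  · intro p _; simp

lemma dom_mul_swap {x : Perm (Fin n)} {i j : Fin n} (hij : i < j) (hx : x i < x j) :
    Dom x (x * Equiv.swap i j) := by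
  intro k v
  by_cases hk : j.val < k
  · rw [cnt_mul_swap_high (lt_trans (Fin.lt_def.mp hij) hk) hk]
  · apply card_le_card
    intro p hp
    simp only [Finset.mem_coe, mem_filter] at hp ⊢
    simp only [mem_filter, mem_univ, true_and, Equiv.Perm.mul_apply] at hp ⊢
    refine ⟨hp.1, ?_⟩
    by_cases hpi : p = i
    · rw [hpi, Equiv.swap_apply_left]
      exact le_trans (hpi ▸ hp.2) (le_of_lt (Fin.lt_def.mp hx))
    · have hpj : p ≠ j := by
        intro hh; rw [hh] at hp; exact hk hp.1
      rw [Equiv.swap_apply_of_ne_of_ne hpi hpj]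
      exact hp.2

lemma dom_of_step' {x : Perm (Fin n)} {i j : Fin n} (hij : i < j)
    (hlen : permLen x < permLen (x * Equiv.swap i j)) : Dom x (x * Equiv.swap i j) := by
  rcases lt_trichotomy (x i) (x j) with hx | hx | hx
  · exact dom_mul_swap hij hx
  · exact absurd (x.injective hx) (ne_of_lt hij)
  · exfalso
    have h2 : permLen (x * Equiv.swap i j) < permLen ((x * Equiv.swap i j) * Equiv.swap i j) := by
      apply permLen_lt_mul_swap hij
      simp only [Equiv.Perm.mul_apply, Equiv.swap_apply_left, Equiv.swap_apply_right]
      exact hx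
    rw [mul_assoc, Equiv.swap_mul_self, mul_one] at h2
    omega

lemma dom_of_step {x y : Perm (Fin n)} (hlen : permLen x < permLen y)
    (hswap : ∃ i j : Fin n, y = x * Equiv.swap i j) : Dom x y := by
  obtain ⟨i, j, rfl⟩ := hswap
  have hne : i ≠ j := by
    rintro rfl
    have hxx : x * Equiv.swap i i = x := by
      ext p
      simp [Equiv.Perm.mul_apply, Equiv.swap_self]
    rw [hxx] at hlen
    exact absurd hlen (lt_irrefl _)
  rcases lt_or_gt_of_ne hne with h | h
  · exact dom_of_step' h hlen
  · rw [Equiv.swap_comm] at hlen ⊢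
    exact dom_of_step' h hlen

lemma bruhatLE_dom {x y : Perm (Fin n)} (h : BruhatLE x y) : Dom x y := by
  induction h with
  | refl => exact fun k v => le_refl _
  | tail _ hbc ih => exact fun k v => le_trans (ih k v) (dom_of_step hbc.1 hbc.2 k v)

lemma cnt_split (z : Perm (Fin n)) (r : Fin n) {k : ℕ} (hk : r.val < k) (v : ℕ) :
    cnt z k v = (univ.filter fun i : Fin n => i.val < r.val ∧ v ≤ (z i).val).card
      + ((if v ≤ (z r).val then 1 else 0)
      + (univ.filter fun i : Fin n => r.val < i.val ∧ i.val < k ∧ v ≤ (z i).val).card) := by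
  unfold cnt
  rw [Finset.card_filter, Finset.card_filter, Finset.card_filter]
  have hmid : (if v ≤ (z r).val then 1 else 0)
      = ∑ i : Fin n, if i = r then (if v ≤ (z i).val then 1 else 0) else 0 := by
    rw [Finset.sum_ite_eq' univ r (fun i => if v ≤ (z i).val then 1 else 0)]
    simp
  rw [hmid, ← Finset.sum_add_distrib, ← Finset.sum_add_distrib]
  apply Finset.sum_congr rfl
  intro i _
  by_cases hir : i = r
  · subst hir
    simp only [if_pos rfl]
    split_ifs <;> omega
  · have hir' : i.val ≠ r.val := fun hh => hir (Fin.ext hh)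
    simp only [if_neg hir]
    split_ifs <;> omega

lemma dom_step_exists {x y : Perm (Fin n)} (hdom : Dom x y) (hxy : x ≠ y) :
    ∃ y' : Perm (Fin n), Dom x y' ∧ (∀ k v : ℕ, cnt y' k v ≤ cnt y k v) ∧
      (∃ k v : ℕ, k < n + 1 ∧ v < n + 1 ∧ cnt y' k v < cnt y k v) ∧
      permLen y' < permLen y ∧ ∃ a b : Fin n, y = y' * Equiv.swap a b := by
  classical
  have hne : (univ.filter fun i : Fin n => x i ≠ y i).Nonempty := by
    by_contra hcon
    rw [Finset.not_nonempty_iff_eq_empty, Finset.filter_eq_empty_iff] at hcon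
    exact hxy (Equiv.ext fun i => by_contra fun hi => hcon (mem_univ i) hi)
  set r := (univ.filter fun i : Fin n => x i ≠ y i).min' hne with hrdef
  have hrmem : x r ≠ y r := by
    have := Finset.min'_mem (univ.filter fun i : Fin n => x i ≠ y i) hne
    rw [mem_filter] at this
    exact this.2
  have hagree : ∀ i : Fin n, i.val < r.val → x i = y i := by
    intro i hi
    by_contra hcon
    have h2 : r ≤ i := Finset.min'_le _ _ (by rw [mem_filter]; exact ⟨mem_univ i, hcon⟩)
    have := Fin.le_def.mp h2
    omega
  have hAeq : ∀ w : ℕ, (univ.filter fun i : Fin n => i.val < r.val ∧ w ≤ (x i).val)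
      = (univ.filter fun i : Fin n => i.val < r.val ∧ w ≤ (y i).val) := by
    intro w
    apply filter_congr
    intro i _
    by_cases hi : i.val < r.val
    · rw [hagree i hi]
    · simp [hi]
  have hxryr : (x r).val < (y r).val := by
    have h1 := hdom (r.val + 1) ((x r).val)
    rw [cnt_split x r (by omega), cnt_split y r (by omega), hAeq] at h1
    have hM : ∀ z : Perm (Fin n),
        (univ.filter fun i : Fin n =>
          r.val < i.val ∧ i.val < r.val + 1 ∧ (x r).val ≤ (z i).val) = ∅ := by
      intro z
      rw [Finset.filter_eq_empty_iff]
      intro i _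
      push_neg
      intro h1' h2'
      omega
    rw [hM x, hM y] at h1
    simp only [Finset.card_empty, if_pos (le_refl ((x r).val))] at h1
    have hrne : (x r).val ≠ (y r).val := fun hh => hrmem (Fin.ext hh)
    split_ifs at h1 with hc
    · omega
    · omega
  have hSne : (univ.filter fun p : Fin n =>
      r.val < p.val ∧ (x r).val ≤ (y p).val ∧ (y p).val < (y r).val).Nonempty := by
    refine ⟨y.symm (x r), ?_⟩
    rw [mem_filter]
    have hyy : y (y.symm (x r)) = x r := y.apply_symm_apply _
    have hp0r : (y.symm (x r)).val ≠ r.val := by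
      intro hh
      have h5 : y.symm (x r) = r := Fin.ext hh
      rw [h5] at hyy
      exact hrmem hyy.symm
    have hp0 : ¬ (y.symm (x r)).val < r.val := by
      intro hh
      have h3 := hagree _ hh
      exact hp0r (congrArg Fin.val (x.injective (h3.trans hyy)))
    exact ⟨mem_univ _, by omega, by simp [hyy], by simp [hyy]; exact hxryr⟩
  set S := univ.filter (fun p : Fin n =>
      r.val < p.val ∧ (x r).val ≤ (y p).val ∧ (y p).val < (y r).val) with hSdef
  set j := S.min' hSne with hjdef
  have hjmem : r.val < j.val ∧ (x r).val ≤ (y j).val ∧ (y j).val < (y r).val := by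
    have h0 := Finset.mem_filter.mp (Finset.min'_mem S hSne)
    exact h0.2
  obtain ⟨hj1, hj2, hj3⟩ := hjmem
  have hjmin : ∀ p : Fin n, r.val < p.val → p.val < j.val →
      ¬((x r).val ≤ (y p).val ∧ (y p).val < (y r).val) := by
    intro p h1 h2 hcon
    have h3 : j ≤ p := Finset.min'_le S p
      (Finset.mem_filter.mpr ⟨mem_univ _, h1, hcon.1, hcon.2⟩)
    have := Fin.le_def.mp h3
    omega
  have hrj : r < j := Fin.lt_def.mpr hj1
  have hkey : ∀ k v : ℕ, r.val < k → k ≤ j.val → (y j).val < v → v ≤ (y r).val →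
      cnt x k v < cnt y k v := by
    intro k v hrk hkj hjv hvr
    by_contra hcon
    push_neg at hcon
    have hdich : ∀ i : Fin n, r.val < i.val → i.val < k → (x r).val ≤ (y i).val →
        (y r).val < (y i).val := by
      intro i h1 h2 h3
      have h4 := hjmin i h1 (by omega)
      have h5 : ¬ (y i).val < (y r).val := fun hh => h4 ⟨h3, hh⟩
      have h6 : (y i).val ≠ (y r).val := by
        intro hh
        have h7 : i = r := y.injective (Fin.ext hh)
        have := congrArg Fin.val h7
        omega
      omega
    have hx_split := cnt_split x r hrk v
    have hy_split := cnt_split y r hrk v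
    rw [hAeq] at hx_split
    have hMyv : (univ.filter fun i : Fin n => r.val < i.val ∧ i.val < k ∧ v ≤ (y i).val)
        = (univ.filter fun i : Fin n =>
            r.val < i.val ∧ i.val < k ∧ (y r).val < (y i).val) := by
      apply filter_congr
      intro i _
      constructor
      · rintro ⟨h1, h2, h3⟩
        exact ⟨h1, h2, hdich i h1 h2 (by omega)⟩
      · rintro ⟨h1, h2, h3⟩
        exact ⟨h1, h2, by omega⟩
    have hMyw : (univ.filter fun i : Fin n =>
          r.val < i.val ∧ i.val < k ∧ (x r).val ≤ (y i).val)
        = (univ.filter fun i : Fin n =>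
            r.val < i.val ∧ i.val < k ∧ (y r).val < (y i).val) := by
      apply filter_congr
      intro i _
      constructor
      · rintro ⟨h1, h2, h3⟩
        exact ⟨h1, h2, hdich i h1 h2 h3⟩
      · rintro ⟨h1, h2, h3⟩
        exact ⟨h1, h2, by omega⟩
    have hMx : (univ.filter fun i : Fin n => r.val < i.val ∧ i.val < k ∧ v ≤ (x i).val).card
        ≤ (univ.filter fun i : Fin n =>
            r.val < i.val ∧ i.val < k ∧ (x r).val ≤ (x i).val).card := by
      apply card_le_card
      intro p hp
      rw [mem_filter] at hp ⊢
      exact ⟨hp.1, hp.2.1, hp.2.2.1, by omega⟩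
    have hw := hdom k ((x r).val)
    rw [cnt_split x r hrk, cnt_split y r hrk, hAeq, hMyw,
      if_pos (le_refl ((x r).val)), if_pos (by omega : (x r).val ≤ (y r).val)] at hw
    rw [hx_split, hy_split, hMyv,
      if_neg (by omega : ¬ v ≤ (x r).val), if_pos (by omega : v ≤ (y r).val)] at hcon
    omega
  have h'r : (y * Equiv.swap r j) r = y j := by
    simp [Equiv.Perm.mul_apply, Equiv.swap_apply_left]
  have h'j : (y * Equiv.swap r j) j = y r := by
    simp [Equiv.Perm.mul_apply, Equiv.swap_apply_right]
  have h'o : ∀ i : Fin n, i ≠ r → i ≠ j → (y * Equiv.swap r j) i = y i := by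
    intro i h1 h2
    simp [Equiv.Perm.mul_apply, Equiv.swap_apply_of_ne_of_ne h1 h2]
  have hdec : ∀ k v : ℕ, cnt (y * Equiv.swap r j) k v ≤ cnt y k v := by
    intro k v
    by_cases hk2 : j.val < k
    · rw [cnt_mul_swap_high (by omega) hk2]
    · apply card_le_card
      intro p hp
      rw [mem_filter] at hp ⊢
      obtain ⟨_, hp1, hp2⟩ := hp
      refine ⟨mem_univ _, hp1, ?_⟩
      have hpj : p ≠ j := fun hh => hk2 (by rw [hh] at hp1; exact hp1)
      by_cases hpr : p = r
      · rw [hpr] at hp2 ⊢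
        rw [h'r] at hp2
        omega
      · rw [h'o p hpr hpj] at hp2
        exact hp2
  have hdomy' : Dom x (y * Equiv.swap r j) := by
    intro k v
    by_cases hk1 : k ≤ r.val
    · have heq : cnt (y * Equiv.swap r j) k v = cnt y k v := by
        apply cnt_congr
        intro i hi
        exact h'o i (fun hh => by rw [hh] at hi; omega)
          (fun hh => by rw [hh] at hi; omega)
      rw [heq]; exact hdom k v
    by_cases hk2 : j.val < k
    · rw [cnt_mul_swap_high (by omega) hk2]; exact hdom k v
    by_cases hv1 : v ≤ (y j).val
    · have heq : cnt (y * Equiv.swap r j) k v = cnt y k v := by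
        unfold cnt
        refine congrArg Finset.card (filter_congr ?_)
        intro i _
        by_cases hik : i.val < k
        · have hij' : i ≠ j := fun hh => hk2 (by rw [hh] at hik; exact hik)
          by_cases hir : i = r
          · rw [hir, h'r]
            constructor
            · rintro ⟨ha, hb⟩; exact ⟨ha, by omega⟩
            · rintro ⟨ha, hb⟩; exact ⟨ha, by omega⟩
          · rw [h'o i hir hij']
        · simp [hik]
      rw [heq]; exact hdom k v
    by_cases hv2 : (y r).val < v
    · have heq : cnt (y * Equiv.swap r j) k v = cnt y k v := by
        unfold cnt
        refine congrArg Finset.card (filter_congr ?_)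
        intro i _
        by_cases hik : i.val < k
        · have hij' : i ≠ j := fun hh => hk2 (by rw [hh] at hik; exact hik)
          by_cases hir : i = r
          · rw [hir, h'r]
            constructor
            · rintro ⟨ha, hb⟩; omega
            · rintro ⟨ha, hb⟩; omega
          · rw [h'o i hir hij']
        · simp [hik]
      rw [heq]; exact hdom k v
    · have hlt := hkey k v (by omega) (by omega) (by omega) (by omega)
      have hssub : cnt y k v ≤ cnt (y * Equiv.swap r j) k v + 1 := by
        have hsub : (univ.filter fun i : Fin n => i.val < k ∧ v ≤ (y i).val)
            ⊆ insert r (univ.filter fun i : Fin n =>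
                i.val < k ∧ v ≤ ((y * Equiv.swap r j) i).val) := by
          intro p hp
          rw [mem_filter] at hp
          by_cases hpr : p = r
          · rw [hpr]; exact mem_insert_self _ _
          · apply mem_insert_of_mem
            rw [mem_filter]
            have hpj : p ≠ j := fun hh => hk2 (by rw [hh] at hp; exact hp.2.1)
            rw [h'o p hpr hpj]
            exact hp
        calc cnt y k v ≤ (insert r (univ.filter fun i : Fin n =>
                i.val < k ∧ v ≤ ((y * Equiv.swap r j) i).val)).card := card_le_card hsub
          _ ≤ cnt (y * Equiv.swap r j) k v + 1 := card_insert_le _ _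
      omega
  have hstrict : cnt (y * Equiv.swap r j) (r.val + 1) ((y r).val)
      < cnt y (r.val + 1) ((y r).val) := by
    have hsub : (univ.filter fun i : Fin n =>
          i.val < r.val + 1 ∧ (y r).val ≤ ((y * Equiv.swap r j) i).val)
        ⊆ (univ.filter fun i : Fin n => i.val < r.val + 1 ∧ (y r).val ≤ (y i).val) := by
      intro p hp
      rw [mem_filter] at hp ⊢
      obtain ⟨_, hp1, hp2⟩ := hp
      refine ⟨mem_univ _, hp1, ?_⟩
      have hpj : p ≠ j := fun hh => by rw [hh] at hp1; omega
      by_cases hpr : p = r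
      · subst hpr; omega
      · rw [h'o p hpr hpj] at hp2; exact hp2
    apply Finset.card_lt_card
    rw [Finset.ssubset_iff_of_subset hsub]
    refine ⟨r, ?_, ?_⟩
    · rw [mem_filter]; exact ⟨mem_univ _, by omega, le_refl _⟩
    · rw [mem_filter]
      push_neg
      intro _ _
      rw [h'r]
      omega
  have hyy' : (y * Equiv.swap r j) * Equiv.swap r j = y := by
    rw [mul_assoc, Equiv.swap_mul_self, mul_one]
  have hperm : permLen (y * Equiv.swap r j) < permLen y := by
    have h9 := permLen_lt_mul_swap hrj (show (y * Equiv.swap r j) r < (y * Equiv.swap r j) j by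
      rw [h'r, h'j]; exact Fin.lt_def.mpr hj3)
    rwa [hyy'] at h9
  exact ⟨y * Equiv.swap r j, hdomy', hdec,
    ⟨r.val + 1, (y r).val, by have := r.isLt; omega, by have := (y r).isLt; omega, hstrict⟩,
    hperm, r, j, hyy'.symm⟩

lemma dom_bruhatLE_aux : ∀ N : ℕ, ∀ x y : Perm (Fin n), Dom x y →
    (∑ p ∈ Finset.range (n+1) ×ˢ Finset.range (n+1), (cnt y p.1 p.2 - cnt x p.1 p.2)) < N →
    BruhatLE x y := by
  intro N
  induction N with
  | zero => intro x y _ h; omega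
  | succ N ih =>
    intro x y hdom hμ
    by_cases hxy : x = y
    · rw [hxy]
      exact Relation.ReflTransGen.refl
    · obtain ⟨y', hdom', hdec, ⟨k0, v0, hk0, hv0, hstrict⟩, hperm, a, b, hab⟩ :=
        dom_step_exists hdom hxy
      have hμ' : (∑ p ∈ Finset.range (n+1) ×ˢ Finset.range (n+1),
          (cnt y' p.1 p.2 - cnt x p.1 p.2)) <
          (∑ p ∈ Finset.range (n+1) ×ˢ Finset.range (n+1),
          (cnt y p.1 p.2 - cnt x p.1 p.2)) := by
        apply Finset.sum_lt_sum
        · intro p _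
          have h1 := hdec p.1 p.2
          omega
        · refine ⟨(k0, v0), ?_, ?_⟩
          · rw [Finset.mem_product, Finset.mem_range, Finset.mem_range]
            exact ⟨hk0, hv0⟩
          · have h1 := hdom' k0 v0
            simp only
            omega
      exact Relation.ReflTransGen.tail (ih x y' hdom' (by omega)) ⟨hperm, a, b, hab⟩

lemma dom_bruhatLE {x y : Perm (Fin n)} (hdom : Dom x y) : BruhatLE x y :=
  dom_bruhatLE_aux
    ((∑ p ∈ Finset.range (n+1) ×ˢ Finset.range (n+1), (cnt y p.1 p.2 - cnt x p.1 p.2)) + 1)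
    x y hdom (Nat.lt_succ_self _)

lemma parabolic_fix (hn : 0 < n) {b : Perm (Fin n)}
    (hb : b ∈ parabolic {i : Fin (n - 1) | 1 ≤ i.val}) : b ⟨0, hn⟩ = ⟨0, hn⟩ := by
  induction hb using Subgroup.closure_induction with
  | mem g hg =>
    obtain ⟨i, hi, rfl⟩ := hg
    apply Equiv.swap_apply_of_ne_of_ne
    · intro hh
      have := congrArg Fin.val hh
      simp only at this
      have hi1 : 1 ≤ i.val := hi
      omega
    · intro hh
      have := congrArg Fin.val hh
      simp only at this
      omega
  | one => rfl
  | mul g h _ _ hg hh =>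
    rw [Equiv.Perm.mul_apply, hh, hg]
  | inv g _ hg =>
    have h1 : g (g⁻¹ ⟨0, hn⟩) = g ⟨0, hn⟩ := by
      rw [show g (g⁻¹ ⟨0, hn⟩) = ⟨0, hn⟩ from g.apply_symm_apply _, hg]
    exact g.injective h1

lemma minRep_adj {a : Perm (Fin n)} (ha : a ∈ minReps {i : Fin (n - 1) | 1 ≤ i.val})
    (p q : Fin n) (h1 : 1 ≤ p.val) (hq : q.val = p.val + 1) : (a p).val < (a q).val := by
  have hqn := q.isLt
  have hi : p.val < n - 1 := by omega
  have hp' : (⟨p.val, by omega⟩ : Fin n) = p := Fin.ext rfl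
  have hq' : (⟨p.val + 1, by omega⟩ : Fin n) = q := Fin.ext hq.symm
  have hlen' : permLen a < permLen (a * Equiv.swap (⟨p.val, by omega⟩ : Fin n)
      (⟨p.val + 1, by omega⟩ : Fin n)) := ha ⟨p.val, hi⟩ h1
  have hswap : Equiv.swap (⟨p.val, by omega⟩ : Fin n) (⟨p.val + 1, by omega⟩ : Fin n)
      = Equiv.swap p q := by
    simp only [hp', hq']
  rw [hswap] at hlen'
  have hpq : p < q := Fin.lt_def.mpr (by omega)
  rcases lt_trichotomy (a p) (a q) with h | h | h
  · exact Fin.lt_def.mp h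
  · exfalso
    have := congrArg Fin.val (a.injective h)
    omega
  · exfalso
    have h2' : permLen (a * Equiv.swap p q) < permLen ((a * Equiv.swap p q) * Equiv.swap p q) := by
      apply permLen_lt_mul_swap hpq
      simp only [Equiv.Perm.mul_apply, Equiv.swap_apply_left, Equiv.swap_apply_right]
      exact h
    rw [mul_assoc, Equiv.swap_mul_self, mul_one] at h2'
    omega

lemma minRep_tail_lt {a : Perm (Fin n)} (ha : a ∈ minReps {i : Fin (n - 1) | 1 ≤ i.val}) :
    ∀ d : ℕ, ∀ p q : Fin n, 1 ≤ p.val → q.val = p.val + d + 1 → (a p).val < (a q).val := by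
  intro d
  induction d with
  | zero =>
    intro p q h1 hq
    exact minRep_adj ha p q h1 (by omega)
  | succ d ih =>
    intro p q h1 hq
    have hqn := q.isLt
    have h4 := ih p ⟨p.val + d + 1, by omega⟩ h1 rfl
    have h5 := minRep_adj ha ⟨p.val + d + 1, by omega⟩ q (by
      show 1 ≤ p.val + d + 1
      omega) (by
      show q.val = p.val + d + 1 + 1
      omega)
    omega

lemma minRep_mono' {a : Perm (Fin n)} (ha : a ∈ minReps {i : Fin (n - 1) | 1 ≤ i.val})
    (p q : Fin n) (h1 : 1 ≤ p.val) (h2 : p.val < q.val) : (a p).val < (a q).val :=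
  minRep_tail_lt ha (q.val - p.val - 1) p q h1 (by omega)

lemma minRep_mono {a : Perm (Fin n)} (ha : a ∈ minReps {i : Fin (n - 1) | 1 ≤ i.val}) :
    StrictMono (fun t : Fin (n - 1) => a ⟨t.val + 1, by have := t.isLt; omega⟩) := by
  intro t1 t2 hlt
  have hlt' : t1.val < t2.val := hlt
  have ht2 := t2.isLt
  apply Fin.lt_def.mpr
  exact minRep_mono' ha ⟨t1.val + 1, by omega⟩ ⟨t2.val + 1, by omega⟩
    (by show 1 ≤ t1.val + 1; omega) (by show t1.val + 1 < t2.val + 1; omega)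

lemma minRep_unique (hn : 0 < n) {a c : Perm (Fin n)}
    (ha : a ∈ minReps {i : Fin (n - 1) | 1 ≤ i.val})
    (hc : c ∈ minReps {i : Fin (n - 1) | 1 ≤ i.val})
    (h0 : a ⟨0, hn⟩ = c ⟨0, hn⟩) : a = c := by
  have hfa := minRep_mono ha
  have hfc := minRep_mono hc
  have hs : (univ.erase (a ⟨0, hn⟩)).card = n - 1 := by
    rw [Finset.card_erase_of_mem (mem_univ _), Finset.card_univ, Fintype.card_fin]
  have hfa_mem : ∀ t : Fin (n - 1),
      (fun t : Fin (n - 1) => a ⟨t.val + 1, by have := t.isLt; omega⟩) t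
        ∈ univ.erase (a ⟨0, hn⟩) := by
    intro t
    rw [Finset.mem_erase]
    refine ⟨?_, mem_univ _⟩
    intro hh
    have h9 := congrArg Fin.val (a.injective hh)
    simp only [Fin.val_mk] at h9
    omega
  have hfc_mem : ∀ t : Fin (n - 1),
      (fun t : Fin (n - 1) => c ⟨t.val + 1, by have := t.isLt; omega⟩) t
        ∈ univ.erase (a ⟨0, hn⟩) := by
    intro t
    rw [Finset.mem_erase, h0]
    refine ⟨?_, mem_univ _⟩
    intro hh
    have h9 := congrArg Fin.val (c.injective hh)
    simp only [Fin.val_mk] at h9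
    omega
  have h1 := Finset.orderEmbOfFin_unique hs hfa_mem hfa
  have h2 := Finset.orderEmbOfFin_unique hs hfc_mem hfc
  apply Equiv.ext
  intro p
  by_cases hp : p.val = 0
  · have hpe : p = ⟨0, hn⟩ := Fin.ext hp
    rw [hpe]; exact h0
  · have hp1 : p.val - 1 < n - 1 := by have := p.isLt; omega
    have h3 := congrFun (h1.trans h2.symm) ⟨p.val - 1, hp1⟩
    simp only at h3
    have hpe : (⟨(⟨p.val - 1, hp1⟩ : Fin (n - 1)).val + 1, by omega⟩ : Fin n) = p :=
      Fin.ext (by simp only; omega)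
    rw [hpe] at h3
    exact h3

lemma dom_transfer (hn : 0 < n) {a b d : Perm (Fin n)}
    (ha : a ∈ minReps {i : Fin (n - 1) | 1 ≤ i.val})
    (hb0 : b ⟨0, hn⟩ = ⟨0, hn⟩) (hd0 : d ⟨0, hn⟩ = ⟨0, hn⟩)
    (hdom : Dom (a * b) (a * d)) : Dom b d := by
  intro k v
  rcases Nat.eq_zero_or_pos v with hv0 | hv1
  · subst hv0
    have he : ∀ z : Perm (Fin n), cnt z k 0 = (univ.filter fun i : Fin n => i.val < k).card := by
      intro z
      unfold cnt
      refine congrArg Finset.card (filter_congr ?_)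
      intro i _
      simp
    rw [he b, he d]
  by_cases hvn : n ≤ v
  · have he : cnt b k v = 0 := by
      rw [cnt, Finset.card_eq_zero, Finset.filter_eq_empty_iff]
      intro i _
      have := (b i).isLt
      push_neg
      intro _
      omega
    rw [he]
    exact Nat.zero_le _
  push_neg at hvn
  have hiff : ∀ s t : Fin n, 1 ≤ s.val → 1 ≤ t.val →
      (s.val ≤ t.val ↔ (a s).val ≤ (a t).val) := by
    intro s t hs ht
    constructor
    · intro h
      rcases Nat.eq_or_lt_of_le h with h' | h'
      · rw [show s = t from Fin.ext h']
      · exact le_of_lt (minRep_mono' ha s t hs h')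
    · intro h
      by_contra hcon
      push_neg at hcon
      have := minRep_mono' ha t s ht hcon
      omega
  have hbne : ∀ z : Perm (Fin n), z ⟨0, hn⟩ = ⟨0, hn⟩ →
      ∀ i : Fin n, i.val ≠ 0 → 1 ≤ (z i).val := by
    intro z hz0 i hi
    by_contra hcon
    push_neg at hcon
    have h2 : z i = ⟨0, hn⟩ := Fin.ext (show (z i).val = 0 by omega)
    have h3 : i = ⟨0, hn⟩ := z.injective (h2.trans hz0.symm)
    exact hi (congrArg Fin.val h3)
  set V := (a ⟨v, hvn⟩).val with hV
  have hkey : ∀ z : Perm (Fin n), z ⟨0, hn⟩ = ⟨0, hn⟩ →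
      cnt (a * z) k V = cnt z k v + (if 0 < k ∧ V ≤ (a ⟨0, hn⟩).val then 1 else 0) := by
    intro z hz0
    unfold cnt
    rw [Finset.card_filter, Finset.card_filter]
    have hmid : (if 0 < k ∧ V ≤ (a ⟨0, hn⟩).val then 1 else 0)
        = ∑ i : Fin n, if i = ⟨0, hn⟩
            then (if 0 < k ∧ V ≤ (a ⟨0, hn⟩).val then 1 else 0) else 0 := by
      rw [Finset.sum_ite_eq' univ (⟨0, hn⟩ : Fin n)]
      simp
    rw [hmid, ← Finset.sum_add_distrib]
    apply Finset.sum_congr rfl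
    intro i _
    by_cases hi0 : i = ⟨0, hn⟩
    · subst hi0
      rw [if_pos rfl]
      have hz : (a * z) ⟨0, hn⟩ = a ⟨0, hn⟩ := by rw [Equiv.Perm.mul_apply, hz0]
      rw [hz]
      have hbv : ¬ v ≤ (z ⟨0, hn⟩).val := by rw [hz0]; show ¬ v ≤ 0; omega
      simp only [hbv, and_false, if_false, Nat.zero_add]
    · rw [if_neg hi0, Nat.add_zero]
      have hiv : i.val ≠ 0 := fun hh => hi0 (Fin.ext hh)
      have h1 : 1 ≤ (z i).val := hbne z hz0 i hiv
      have h2 : v ≤ (z i).val ↔ V ≤ ((a * z) i).val := by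
        rw [Equiv.Perm.mul_apply, hV]
        exact hiff ⟨v, hvn⟩ (z i) (by show 1 ≤ v; omega) h1
      by_cases hik : i.val < k
      · by_cases hzv : v ≤ (z i).val
        · rw [if_pos ⟨hik, h2.mp hzv⟩, if_pos ⟨hik, hzv⟩]
        · rw [if_neg (fun hc => hzv (h2.mpr hc.2)), if_neg (fun hc => hzv hc.2)]
      · rw [if_neg (fun hc => hik hc.1), if_neg (fun hc => hik hc.1)]
  have h1 := hkey b hb0
  have h2 := hkey d hd0
  have h3 := hdom k V
  rw [h1, h2] at h3
  omega

/-- Let `w ∈ S_n`, `J = {2, …, n-1}`, and `u ≤ w` in Bruhat order with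
`u(1) = w(1)`.  Then `u_J ≤ w_J` in Bruhat order, where `u = u^J u_J` and
`w = w^J w_J` are the parabolic decompositions. -/
theorem stmt_8 (n : ℕ) (hn : 1 ≤ n) (u w : Perm (Fin n))
    (huw : BruhatLE u w) (h1 : u ⟨0, by omega⟩ = w ⟨0, by omega⟩)
    (a b c d : Perm (Fin n))
    (ha : a ∈ minReps {i : Fin (n - 1) | 1 ≤ i.val})
    (hb : b ∈ parabolic {i : Fin (n - 1) | 1 ≤ i.val})
    (hu : u = a * b)
    (hc : c ∈ minReps {i : Fin (n - 1) | 1 ≤ i.val})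
    (hd : d ∈ parabolic {i : Fin (n - 1) | 1 ≤ i.val})
    (hw : w = c * d) :
    BruhatLE b d := by
  have hn0 : 0 < n := hn
  have hb0 : b ⟨0, hn0⟩ = ⟨0, hn0⟩ := parabolic_fix hn0 hb
  have hd0 : d ⟨0, hn0⟩ = ⟨0, hn0⟩ := parabolic_fix hn0 hd
  have hau : a ⟨0, hn0⟩ = c ⟨0, hn0⟩ := by
    have h2 : u ⟨0, hn0⟩ = a ⟨0, hn0⟩ := by rw [hu, Equiv.Perm.mul_apply, hb0]
    have h3 : w ⟨0, hn0⟩ = c ⟨0, hn0⟩ := by rw [hw, Equiv.Perm.mul_apply, hd0]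
    rw [← h2, ← h3]
    exact h1
  have hac : a = c := minRep_unique hn0 ha hc hau
  have hdomuw : Dom u w := bruhatLE_dom huw
  rw [hu, hw, ← hac] at hdomuw
  exact dom_bruhatLE (dom_transfer hn0 ha hb0 hd0 hdomuw)
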